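/- Let G and G_p be finite simple undirected graphs on the same vertex set V in which every vertex has the same degree, let S̃ and S̃_p be their normalised augmented adjacency matrices with γ = 1, and for each vertex u let R_u bound both the number of edges at u deleted and the number added, and let δ_u be a lower bound on the degree of every vertex that u disconnects from or connects to. Let X ∈ ℝ^{n×d} have columns of unit Euclidean norm, Θ ∈ ℝ^{d×c}, and K ≥ 1. Then the SGCN logits satisfy ‖S̃^K X Θ − S̃_p^K X Θ‖_F ≤ √d · K · ‖Θ‖₂ · max_{u∈V} 2·R_u / √((d_u+1)(δ_u+1)). -/

import Mathlib

/-- The operator norm of a real matrix induced by the Euclidean vector norm. -/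
noncomputable def opNorm {m n : Type*} [Fintype m] [Fintype n] [DecidableEq n]
    (M : Matrix m n ℝ) : ℝ :=
  ‖LinearMap.toContinuousLinearMap (Matrix.toEuclideanLin M)‖

/-- The Frobenius norm of a real matrix. -/
noncomputable def frobNorm {m n : Type*} [Fintype m] [Fintype n]
    (M : Matrix m n ℝ) : ℝ :=
  Real.sqrt (∑ i, ∑ j, (M i j) ^ 2)

/-- The Euclidean norm of a real vector. -/
noncomputable def vecNorm {n : Type*} [Fintype n] (x : n → ℝ) : ℝ :=
  Real.sqrt (∑ i, x i ^ 2)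

/-- The normalised augmented adjacency matrix
`S_γ = (D+γI)^{-1/2} (A+γI) (D+γI)^{-1/2}` of a finite simple graph. -/
noncomputable def naam {V : Type*} [Fintype V] [DecidableEq V]
    (G : SimpleGraph V) [DecidableRel G.Adj] (γ : ℝ) : Matrix V V ℝ :=
  Matrix.diagonal (fun u => (Real.sqrt ((G.degree u : ℝ) + γ))⁻¹) *
    (G.adjMatrix ℝ + γ • (1 : Matrix V V ℝ)) *
      Matrix.diagonal (fun u => (Real.sqrt ((G.degree u : ℝ) + γ))⁻¹)

lemma eucl_norm_eq {V : Type*} [Fintype V] (x : V → ℝ) :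
    ‖(WithLp.equiv 2 (V → ℝ)).symm x‖ = Real.sqrt (∑ u, x u ^ 2) := by
  rw [EuclideanSpace.norm_eq]
  congr 1; apply Finset.sum_congr rfl; intro u _
  simp [Real.norm_eq_abs, sq_abs]

lemma opNorm_vec_le {m n : Type*} [Fintype m] [Fintype n] [DecidableEq n]
    (M : Matrix m n ℝ) (x : n → ℝ) :
    Real.sqrt (∑ i, (M.mulVec x i) ^ 2) ≤ opNorm M * Real.sqrt (∑ j, x j ^ 2) := by
  have h := (LinearMap.toContinuousLinearMap (Matrix.toEuclideanLin M)).le_opNorm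
    ((WithLp.equiv 2 (n → ℝ)).symm x)
  simpa [Matrix.toEuclideanLin_apply_piLp_toLp, EuclideanSpace.norm_eq, Real.norm_eq_abs, sq_abs, opNorm] using h

lemma opNorm_le_vec {m n : Type*} [Fintype m] [Fintype n] [DecidableEq n]
    (M : Matrix m n ℝ) {c : ℝ} (hc : 0 ≤ c)
    (h : ∀ x : n → ℝ, Real.sqrt (∑ i, (M.mulVec x i) ^ 2) ≤ c * Real.sqrt (∑ j, x j ^ 2)) :
    opNorm M ≤ c := by
  apply ContinuousLinearMap.opNorm_le_bound _ hc
  intro v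
  have h2 := h ((WithLp.equiv 2 (n → ℝ)) v)
  rw [show v = (WithLp.equiv 2 (n → ℝ)).symm ((WithLp.equiv 2 (n → ℝ)) v) from (by simp)]
  rw [LinearMap.coe_toContinuousLinearMap', WithLp.equiv_symm_apply, Matrix.toEuclideanLin_apply_piLp_toLp,
    ← WithLp.equiv_symm_apply, eucl_norm_eq, ← WithLp.equiv_symm_apply, eucl_norm_eq]
  exact h2

lemma sum_sq_nonneg {n : Type*} [Fintype n] (x : n → ℝ) : (0:ℝ) ≤ ∑ j, x j ^ 2 :=
  Finset.sum_nonneg fun j _ => sq_nonneg _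

lemma mulVec_sq_le {m n : Type*} [Fintype m] [Fintype n] [DecidableEq n]
    (M : Matrix m n ℝ) (x : n → ℝ) :
    ∑ i, (M.mulVec x i) ^ 2 ≤ opNorm M ^ 2 * ∑ j, x j ^ 2 := by
  have h := opNorm_vec_le M x
  have h1 := sum_sq_nonneg (M.mulVec x)
  have h2 := sum_sq_nonneg x
  have hs1 : Real.sqrt (∑ i, (M.mulVec x i) ^ 2) ^ 2 = ∑ i, (M.mulVec x i) ^ 2 :=
    Real.sq_sqrt h1
  have hs2 : Real.sqrt (∑ j, x j ^ 2) ^ 2 = ∑ j, x j ^ 2 := Real.sq_sqrt h2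
  nlinarith [Real.sqrt_nonneg (∑ i, (M.mulVec x i) ^ 2), Real.sqrt_nonneg (∑ j, x j ^ 2),
    norm_nonneg (LinearMap.toContinuousLinearMap (Matrix.toEuclideanLin M))]

lemma opNorm_nonneg' {m n : Type*} [Fintype m] [Fintype n] [DecidableEq n]
    (M : Matrix m n ℝ) : 0 ≤ opNorm M := norm_nonneg _

lemma opNorm_add_le {m n : Type*} [Fintype m] [Fintype n] [DecidableEq n]
    (A B : Matrix m n ℝ) : opNorm (A + B) ≤ opNorm A + opNorm B := by
  unfold opNorm; rw [map_add, map_add]; exact norm_add_le _ _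

lemma opNorm_mul_le {l m n : Type*} [Fintype l] [Fintype m] [Fintype n]
    [DecidableEq m] [DecidableEq n]
    (A : Matrix l m ℝ) (B : Matrix m n ℝ) : opNorm (A * B) ≤ opNorm A * opNorm B := by
  apply opNorm_le_vec _ (mul_nonneg (opNorm_nonneg' A) (opNorm_nonneg' B))
  intro x
  rw [← Matrix.mulVec_mulVec]
  calc Real.sqrt (∑ i, (A.mulVec (B.mulVec x) i) ^ 2)
      ≤ opNorm A * Real.sqrt (∑ i, (B.mulVec x i) ^ 2) := opNorm_vec_le A _
    _ ≤ opNorm A * (opNorm B * Real.sqrt (∑ j, x j ^ 2)) := by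
        exact mul_le_mul_of_nonneg_left (opNorm_vec_le B x) (opNorm_nonneg' A)
    _ = opNorm A * opNorm B * Real.sqrt (∑ j, x j ^ 2) := by ring

lemma opNorm_one_le {n : Type*} [Fintype n] [DecidableEq n] :
    opNorm (1 : Matrix n n ℝ) ≤ 1 := by
  apply opNorm_le_vec _ zero_le_one
  intro x
  rw [Matrix.one_mulVec, one_mul]

lemma opNorm_pow_le {n : Type*} [Fintype n] [DecidableEq n]
    {A : Matrix n n ℝ} (hA : opNorm A ≤ 1) (k : ℕ) : opNorm (A ^ k) ≤ 1 := by
  induction k with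
  | zero => simpa using opNorm_one_le
  | succ k ih =>
      rw [pow_succ]
      calc opNorm (A ^ k * A) ≤ opNorm (A ^ k) * opNorm A := opNorm_mul_le _ _
        _ ≤ 1 * 1 := mul_le_mul ih hA (opNorm_nonneg' A) zero_le_one
        _ = 1 := by ring

lemma opNorm_pow_sub_pow {n : Type*} [Fintype n] [DecidableEq n]
    {A B : Matrix n n ℝ} (hA : opNorm A ≤ 1) (hB : opNorm B ≤ 1) (k : ℕ) :
    opNorm (A ^ k - B ^ k) ≤ k * opNorm (A - B) := by
  induction k with
  | zero =>
      simp only [pow_zero, sub_self, Nat.cast_zero, zero_mul]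
      unfold opNorm; rw [map_zero, map_zero, norm_zero]
  | succ k ih =>
      have hexp : A ^ (k+1) - B ^ (k+1) = A ^ k * (A - B) + (A ^ k - B ^ k) * B := by
        rw [pow_succ, pow_succ]; noncomm_ring
      rw [hexp]
      calc opNorm (A ^ k * (A - B) + (A ^ k - B ^ k) * B)
          ≤ opNorm (A ^ k * (A - B)) + opNorm ((A ^ k - B ^ k) * B) := opNorm_add_le _ _
        _ ≤ opNorm (A ^ k) * opNorm (A - B) + opNorm (A ^ k - B ^ k) * opNorm B :=
            add_le_add (opNorm_mul_le _ _) (opNorm_mul_le _ _)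
        _ ≤ 1 * opNorm (A - B) + (k * opNorm (A - B)) * 1 := by
            apply add_le_add
            · exact mul_le_mul_of_nonneg_right (opNorm_pow_le hA k) (opNorm_nonneg' _)
            · apply mul_le_mul ih hB (opNorm_nonneg' _)
              exact mul_nonneg (Nat.cast_nonneg k) (opNorm_nonneg' _)
        _ = (k + 1 : ℕ) * opNorm (A - B) := by push_cast; ring

lemma frobNorm_nonneg {m n : Type*} [Fintype m] [Fintype n] (M : Matrix m n ℝ) :
    0 ≤ frobNorm M := Real.sqrt_nonneg _

lemma frob_mul_left {l m n : Type*} [Fintype l] [Fintype m] [Fintype n] [DecidableEq m]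
    (M : Matrix l m ℝ) (N : Matrix m n ℝ) :
    frobNorm (M * N) ≤ opNorm M * frobNorm N := by
  have key : ∑ i, ∑ j, ((M * N) i j) ^ 2 ≤ opNorm M ^ 2 * ∑ k, ∑ j, (N k j) ^ 2 := by
    rw [Finset.sum_comm]
    have h2 : ∀ j : n, ∑ i, ((M * N) i j) ^ 2 ≤ opNorm M ^ 2 * ∑ k, (N k j) ^ 2 := by
      intro j
      have := mulVec_sq_le M (fun k => N k j)
      simpa [Matrix.mulVec, dotProduct, Matrix.mul_apply] using this
    calc ∑ j, ∑ i, ((M * N) i j) ^ 2 ≤ ∑ j, (opNorm M ^ 2 * ∑ k, (N k j) ^ 2) :=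
          Finset.sum_le_sum fun j _ => h2 j
      _ = opNorm M ^ 2 * ∑ j, ∑ k, (N k j) ^ 2 := by rw [Finset.mul_sum]
      _ = opNorm M ^ 2 * ∑ k, ∑ j, (N k j) ^ 2 := by rw [Finset.sum_comm]
  unfold frobNorm
  calc Real.sqrt (∑ i, ∑ j, ((M * N) i j) ^ 2)
      ≤ Real.sqrt (opNorm M ^ 2 * ∑ k, ∑ j, (N k j) ^ 2) := Real.sqrt_le_sqrt key
    _ = opNorm M * Real.sqrt (∑ k, ∑ j, (N k j) ^ 2) := by
        rw [Real.sqrt_mul (sq_nonneg _), Real.sqrt_sq (opNorm_nonneg' M)]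

lemma opNorm_transpose_le {m n : Type*} [Fintype m] [Fintype n] [DecidableEq m] [DecidableEq n]
    (A : Matrix m n ℝ) : opNorm A.transpose ≤ opNorm A := by
  apply opNorm_le_vec _ (opNorm_nonneg' A)
  intro y
  set z : n → ℝ := A.transpose.mulVec y with hz
  have hzz : ∀ j, z j = ∑ k, A k j * y k := fun j => by
    simp [hz, Matrix.mulVec, dotProduct, Matrix.transpose_apply]
  have h1 : ∑ j, z j ^ 2 = ∑ k, y k * A.mulVec z k :=
    calc ∑ j, z j ^ 2 = ∑ j, ∑ k, A k j * y k * z j := by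
          refine Finset.sum_congr rfl fun j _ => ?_
          rw [sq, hzz j, Finset.sum_mul]
      _ = ∑ k, ∑ j, A k j * y k * z j := Finset.sum_comm
      _ = ∑ k, y k * A.mulVec z k := by
          refine Finset.sum_congr rfl fun k _ => ?_
          rw [show A.mulVec z k = ∑ j, A k j * z j from
            (by simp [Matrix.mulVec, dotProduct]), Finset.mul_sum]
          exact Finset.sum_congr rfl fun j _ => by ring
  have h2 : ∑ k, y k * A.mulVec z k ≤
      Real.sqrt (∑ k, y k ^ 2) * Real.sqrt (∑ k, (A.mulVec z k) ^ 2) :=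
    Real.sum_mul_le_sqrt_mul_sqrt _ _ _
  have h3 : Real.sqrt (∑ k, (A.mulVec z k) ^ 2) ≤
      opNorm A * Real.sqrt (∑ j, z j ^ 2) := opNorm_vec_le A z
  rcases eq_or_lt_of_le (sum_sq_nonneg z) with h | h
  · rw [← h, Real.sqrt_zero]
    exact mul_nonneg (opNorm_nonneg' A) (Real.sqrt_nonneg _)
  · have hS : 0 < Real.sqrt (∑ j, z j ^ 2) := Real.sqrt_pos.mpr h
    have hSS : ∑ j, z j ^ 2 = Real.sqrt (∑ j, z j ^ 2) * Real.sqrt (∑ j, z j ^ 2) :=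
      (Real.mul_self_sqrt h.le).symm
    nlinarith [Real.sqrt_nonneg (∑ k, y k ^ 2), opNorm_nonneg' A]

lemma frob_mul_right {l m n : Type*} [Fintype l] [Fintype m] [Fintype n]
    [DecidableEq m] [DecidableEq n]
    (A : Matrix l m ℝ) (B : Matrix m n ℝ) :
    frobNorm (A * B) ≤ frobNorm A * opNorm B := by
  have key : ∑ i, ∑ j, ((A * B) i j) ^ 2 ≤ (∑ i, ∑ k, (A i k) ^ 2) * opNorm B ^ 2 := by
    have h2 : ∀ i : l, ∑ j, ((A * B) i j) ^ 2 ≤ opNorm B ^ 2 * ∑ k, (A i k) ^ 2 := by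
      intro i
      have h := mulVec_sq_le B.transpose (fun k => A i k)
      have hb : opNorm B.transpose ^ 2 ≤ opNorm B ^ 2 := by
        have := opNorm_transpose_le B
        nlinarith [opNorm_nonneg' B.transpose, opNorm_nonneg' B]
      have heq : ∀ j, B.transpose.mulVec (fun k => A i k) j = (A * B) i j := by
        intro j
        simp only [Matrix.mulVec, dotProduct, Matrix.transpose_apply, Matrix.mul_apply]
        exact Finset.sum_congr rfl fun k _ => by ring
      calc ∑ j, ((A * B) i j) ^ 2 = ∑ j, (B.transpose.mulVec (fun k => A i k) j) ^ 2 := by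
            exact Finset.sum_congr rfl fun j _ => by rw [heq j]
        _ ≤ opNorm B.transpose ^ 2 * ∑ k, (A i k) ^ 2 := h
        _ ≤ opNorm B ^ 2 * ∑ k, (A i k) ^ 2 :=
            mul_le_mul_of_nonneg_right hb (sum_sq_nonneg _)
    calc ∑ i, ∑ j, ((A * B) i j) ^ 2 ≤ ∑ i, (opNorm B ^ 2 * ∑ k, (A i k) ^ 2) :=
          Finset.sum_le_sum fun i _ => h2 i
      _ = (∑ i, ∑ k, (A i k) ^ 2) * opNorm B ^ 2 := by rw [Finset.sum_mul]; exact Finset.sum_congr rfl fun i _ => by rw [Finset.mul_sum, Finset.sum_mul]; exact Finset.sum_congr rfl fun k _ => mul_comm _ _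
  unfold frobNorm
  calc Real.sqrt (∑ i, ∑ j, ((A * B) i j) ^ 2)
      ≤ Real.sqrt ((∑ i, ∑ k, (A i k) ^ 2) * opNorm B ^ 2) := Real.sqrt_le_sqrt key
    _ = Real.sqrt (∑ i, ∑ k, (A i k) ^ 2) * opNorm B := by
        rw [Real.sqrt_mul (Finset.sum_nonneg fun i _ => sum_sq_nonneg (A i)),
          Real.sqrt_sq (opNorm_nonneg' B)]

lemma opNorm_le_of_symm {V : Type*} [Fintype V] [DecidableEq V]
    (M : Matrix V V ℝ) (hM : ∀ u v, M u v = M v u) {c : ℝ} (hc : 0 ≤ c)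
    (h : ∀ x : V → ℝ, |∑ u, ∑ v, M u v * x u * x v| ≤ c * ∑ u, x u ^ 2) :
    opNorm M ≤ c := by
  apply opNorm_le_vec M hc
  intro x
  set y := M.mulVec x with hy
  set X := Real.sqrt (∑ u, x u ^ 2) with hXdef
  set Y := Real.sqrt (∑ u, y u ^ 2) with hYdef
  have hXnn : 0 ≤ X := Real.sqrt_nonneg _
  have hYnn : 0 ≤ Y := Real.sqrt_nonneg _
  rcases eq_or_lt_of_le (sum_sq_nonneg y) with h0 | h0
  · rw [hYdef, ← h0, Real.sqrt_zero]
    exact mul_nonneg hc hXnn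
  have hY2 : Y ^ 2 = ∑ u, y u ^ 2 := Real.sq_sqrt (sum_sq_nonneg y)
  have hX2 : X ^ 2 = ∑ u, x u ^ 2 := Real.sq_sqrt (sum_sq_nonneg x)
  have hYpos : 0 < Y := Real.sqrt_pos.mpr h0
  have hXpos : 0 < X := by
    rcases eq_or_lt_of_le (sum_sq_nonneg x) with h1 | h1
    · exfalso
      have hx0 : ∀ u, x u = 0 := by
        intro u
        have := Finset.sum_eq_zero_iff_of_nonneg
          (fun v (_ : v ∈ Finset.univ) => sq_nonneg (x v)) |>.mp h1.symm u (Finset.mem_univ u)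
        exact pow_eq_zero_iff two_ne_zero |>.mp this
      have : ∀ u, y u = 0 := by
        intro u
        simp [hy, Matrix.mulVec, dotProduct]
        exact Finset.sum_eq_zero fun v _ => by rw [hx0 v, mul_zero]
      have : (∑ u, y u ^ 2) = 0 := Finset.sum_eq_zero fun u _ => by rw [this u]; ring
      exact absurd this (ne_of_gt h0)
    · exact Real.sqrt_pos.mpr h1
  -- bilinear identities
  have hmv : ∀ u, ∑ v, M u v * x v = y u := fun u => by
    simp [hy, Matrix.mulVec, dotProduct]
  have hByx : ∑ u, ∑ v, M u v * y u * x v = ∑ u, y u ^ 2 := by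
    refine Finset.sum_congr rfl fun u _ => ?_
    calc ∑ v, M u v * y u * x v = y u * ∑ v, M u v * x v := by
          rw [Finset.mul_sum]; exact Finset.sum_congr rfl fun v _ => by ring
      _ = y u ^ 2 := by rw [hmv u]; ring
  have hBxy : ∑ u, ∑ v, M u v * x u * y v = ∑ u, y u ^ 2 := by
    calc ∑ u, ∑ v, M u v * x u * y v = ∑ v, ∑ u, M u v * x u * y v := Finset.sum_comm
      _ = ∑ v, ∑ u, M v u * y v * x u := by
          refine Finset.sum_congr rfl fun v _ => Finset.sum_congr rfl fun u _ => ?_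
          rw [hM u v]; ring
      _ = ∑ u, y u ^ 2 := hByx
  have hexp : (∑ u, ∑ v, M u v * (Y * x u + X * y u) * (Y * x v + X * y v))
      - (∑ u, ∑ v, M u v * (Y * x u - X * y u) * (Y * x v - X * y v))
      = 4 * X * Y * ∑ u, y u ^ 2 := by
    rw [← Finset.sum_sub_distrib]
    have : ∀ u : V, (∑ v, M u v * (Y * x u + X * y u) * (Y * x v + X * y v))
        - (∑ v, M u v * (Y * x u - X * y u) * (Y * x v - X * y v))
        = ∑ v, (2 * X * Y * (M u v * x u * y v) + 2 * X * Y * (M u v * y u * x v)) := by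
      intro u
      rw [← Finset.sum_sub_distrib]
      exact Finset.sum_congr rfl fun v _ => by ring
    rw [Finset.sum_congr rfl fun u _ => this u]
    have hsplit : ∀ u : V, (∑ v, (2 * X * Y * (M u v * x u * y v)
        + 2 * X * Y * (M u v * y u * x v)))
        = 2 * X * Y * (∑ v, M u v * x u * y v) + 2 * X * Y * (∑ v, M u v * y u * x v) := by
      intro u
      rw [Finset.sum_add_distrib, Finset.mul_sum, Finset.mul_sum]
    rw [Finset.sum_congr rfl fun u _ => hsplit u, Finset.sum_add_distrib,
      ← Finset.mul_sum, ← Finset.mul_sum, hBxy, hByx]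
    ring
  have hz1 := h (fun u => Y * x u + X * y u)
  have hz2 := h (fun u => Y * x u - X * y u)
  have hzsum : (∑ u, (Y * x u + X * y u) ^ 2) + (∑ u, (Y * x u - X * y u) ^ 2)
      = 4 * X ^ 2 * Y ^ 2 := by
    rw [← Finset.sum_add_distrib]
    have : ∀ u : V, (Y * x u + X * y u) ^ 2 + (Y * x u - X * y u) ^ 2
        = 2 * Y ^ 2 * x u ^ 2 + 2 * X ^ 2 * y u ^ 2 := fun u => by ring
    rw [Finset.sum_congr rfl fun u _ => this u, Finset.sum_add_distrib,
      ← Finset.mul_sum, ← Finset.mul_sum, ← hX2, ← hY2]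
    ring
  have hfinal : 4 * X * Y * (Y ^ 2) ≤ 4 * c * X ^ 2 * Y ^ 2 := by
    have hle : (∑ u, ∑ v, M u v * (Y * x u + X * y u) * (Y * x v + X * y v))
        - (∑ u, ∑ v, M u v * (Y * x u - X * y u) * (Y * x v - X * y v))
        ≤ c * (∑ u, (Y * x u + X * y u) ^ 2) + c * (∑ u, (Y * x u - X * y u) ^ 2) := by
      have a1 := (abs_le.mp hz1).2
      have a2 := (abs_le.mp hz2).1
      linarith [neg_abs_le (∑ u, ∑ v, M u v * (Y * x u - X * y u) * (Y * x v - X * y v)),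
        le_abs_self (∑ u, ∑ v, M u v * (Y * x u + X * y u) * (Y * x v + X * y v))]
    rw [hexp] at hle
    have e1 : c * ((∑ u, (Y * x u + X * y u) ^ 2) + (∑ u, (Y * x u - X * y u) ^ 2))
        = 4 * c * X ^ 2 * Y ^ 2 := by rw [hzsum]; ring
    have e2 : 4 * X * Y * (Y ^ 2) = 4 * X * Y * ∑ u, y u ^ 2 := by rw [hY2]
    linarith [hle, e1, e2]
  nlinarith [hYpos, hXpos, mul_pos hXpos (mul_pos hYpos hYpos)]

lemma naam_one_apply {V : Type*} [Fintype V] [DecidableEq V]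
    (G : SimpleGraph V) [DecidableRel G.Adj] (u v : V) :
    naam G 1 u v = ((if G.Adj u v then (1:ℝ) else 0) + (if u = v then (1:ℝ) else 0)) *
      ((Real.sqrt ((G.degree u : ℝ) + 1))⁻¹ * (Real.sqrt ((G.degree v : ℝ) + 1))⁻¹) := by
  unfold naam
  rw [Matrix.mul_apply]
  simp only [Matrix.diagonal_mul, Matrix.mul_diagonal, Matrix.add_apply,
    SimpleGraph.adjMatrix_apply, Matrix.smul_apply, Matrix.one_apply, one_smul]
  rw [Finset.sum_eq_single v]
  · simp only [Matrix.diagonal_apply_eq]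
    ring_nf
  · intro b _ hb
    simp [Matrix.diagonal_apply_ne _ hb]
  · intro hv; exact absurd (Finset.mem_univ v) hv

lemma abs_quad_le {V : Type*} [Fintype V] (f E : V → V → ℝ) (q : V → ℝ)
    (hE : ∀ u v, E u v = E v u)
    (hbound : ∀ u v, |f u v| ≤ E u v * (q u + q v) / 2) :
    |∑ u, ∑ v, f u v| ≤ ∑ u, (∑ v, E u v) * q u := by
  have step1 : |∑ u, ∑ v, f u v| ≤ ∑ u, ∑ v, |f u v| :=
    (Finset.abs_sum_le_sum_abs _ _).trans
      (Finset.sum_le_sum fun u _ => Finset.abs_sum_le_sum_abs _ _)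
  have step2 : ∑ u, ∑ v, |f u v| ≤ ∑ u, ∑ v, E u v * (q u + q v) / 2 :=
    Finset.sum_le_sum fun u _ => Finset.sum_le_sum fun v _ => hbound u v
  have split : ∑ u, ∑ v, E u v * (q u + q v) / 2
      = (∑ u, ∑ v, E u v * q u / 2) + (∑ u, ∑ v, E u v * q v / 2) := by
    rw [← Finset.sum_add_distrib]
    refine Finset.sum_congr rfl fun u _ => ?_
    rw [← Finset.sum_add_distrib]
    exact Finset.sum_congr rfl fun v _ => by ring
  have swap : ∑ u, ∑ v, E u v * q v / 2 = ∑ u, ∑ v, E u v * q u / 2 := by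
    rw [Finset.sum_comm]
    refine Finset.sum_congr rfl fun u _ => Finset.sum_congr rfl fun v _ => by
      rw [hE v u]
  have final : (∑ u, ∑ v, E u v * q u / 2) + (∑ u, ∑ v, E u v * q u / 2)
      = ∑ u, (∑ v, E u v) * q u := by
    rw [← Finset.sum_add_distrib]
    refine Finset.sum_congr rfl fun u _ => ?_
    rw [← Finset.sum_add_distrib, Finset.sum_mul]
    exact Finset.sum_congr rfl fun v _ => by ring
  calc |∑ u, ∑ v, f u v| ≤ ∑ u, ∑ v, E u v * (q u + q v) / 2 := step1.trans step2
    _ = ∑ u, (∑ v, E u v) * q u := by rw [split, swap, final]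

lemma adj_row_sum {V : Type*} [Fintype V] [DecidableEq V]
    (G : SimpleGraph V) [DecidableRel G.Adj] (u : V) :
    ∑ v, ((if G.Adj u v then (1:ℝ) else 0) + (if u = v then (1:ℝ) else 0))
      = (G.degree u : ℝ) + 1 := by
  rw [Finset.sum_add_distrib, Finset.sum_boole, Finset.sum_ite_eq]
  simp [SimpleGraph.neighborFinset_eq_filter, SimpleGraph.degree]

lemma opNorm_naam_le_one {V : Type*} [Fintype V] [DecidableEq V]
    (G : SimpleGraph V) [DecidableRel G.Adj] :
    opNorm (naam G 1) ≤ 1 := by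
  set g : V → ℝ := fun u => (Real.sqrt ((G.degree u : ℝ) + 1))⁻¹ with hg
  have hdpos : ∀ u : V, (0:ℝ) < (G.degree u : ℝ) + 1 := fun u => by positivity
  have hgsq : ∀ u, g u ^ 2 = ((G.degree u : ℝ) + 1)⁻¹ := fun u => by
    rw [hg, inv_pow, Real.sq_sqrt (hdpos u).le]
  set A : V → V → ℝ :=
    fun u v => (if G.Adj u v then (1:ℝ) else 0) + (if u = v then (1:ℝ) else 0) with hA
  have hAsym : ∀ u v, A u v = A v u := by
    intro u v
    simp only [hA]
    rw [if_congr (SimpleGraph.adj_comm G u v) rfl rfl, if_congr eq_comm rfl rfl]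
  have hAnn : ∀ u v, 0 ≤ A u v := fun u v => by
    simp only [hA]; positivity
  have hsym : ∀ u v, naam G 1 u v = naam G 1 v u := by
    intro u v
    rw [naam_one_apply, naam_one_apply]
    have := hAsym u v
    simp only [hA] at this
    rw [this]; ring
  apply opNorm_le_of_symm _ hsym zero_le_one
  intro x
  rw [one_mul]
  have hterm : ∀ u v, naam G 1 u v * x u * x v = A u v * (g u * x u) * (g v * x v) := by
    intro u v
    rw [naam_one_apply]
    simp only [hA, hg]
    ring
  have hb : ∀ u v, |naam G 1 u v * x u * x v|
      ≤ A u v * ((g u * x u) ^ 2 + (g v * x v) ^ 2) / 2 := by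
    intro u v
    rw [hterm u v, abs_mul, abs_mul, abs_of_nonneg (hAnn u v)]
    have h1 : |g u * x u| * |g v * x v| ≤ ((g u * x u) ^ 2 + (g v * x v) ^ 2) / 2 := by
      nlinarith [sq_nonneg (|g u * x u| - |g v * x v|), sq_abs (g u * x u), sq_abs (g v * x v)]
    calc A u v * |g u * x u| * |g v * x v| = A u v * (|g u * x u| * |g v * x v|) := by ring
      _ ≤ A u v * (((g u * x u) ^ 2 + (g v * x v) ^ 2) / 2) :=
          mul_le_mul_of_nonneg_left h1 (hAnn u v)
      _ = A u v * ((g u * x u) ^ 2 + (g v * x v) ^ 2) / 2 := by ring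
  calc |∑ u, ∑ v, naam G 1 u v * x u * x v|
      ≤ ∑ u, (∑ v, A u v) * (g u * x u) ^ 2 :=
        abs_quad_le _ A (fun u => (g u * x u) ^ 2) hAsym hb
    _ = ∑ u, x u ^ 2 := by
        refine Finset.sum_congr rfl fun u _ => ?_
        rw [show (∑ v, A u v) = (G.degree u : ℝ) + 1 from adj_row_sum G u]
        rw [mul_pow, hgsq u]
        field_simp

lemma opNorm_naam_diff_le {V : Type*} [Fintype V] [DecidableEq V] [Nonempty V]
    (G Gp : SimpleGraph V) [DecidableRel G.Adj] [DecidableRel Gp.Adj]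
    (hdeg : ∀ u, G.degree u = Gp.degree u)
    (R : V → ℕ) (δ : V → ℕ)
    (hRD : ∀ u, (Finset.univ.filter (fun v => G.Adj u v ∧ ¬ Gp.Adj u v)).card ≤ R u)
    (hRA : ∀ u, (Finset.univ.filter (fun v => Gp.Adj u v ∧ ¬ G.Adj u v)).card ≤ R u)
    (hδ : ∀ u v, (G.Adj u v ∧ ¬ Gp.Adj u v) ∨ (Gp.Adj u v ∧ ¬ G.Adj u v) →
      δ u ≤ G.degree v) :
    opNorm (naam G 1 - naam Gp 1) ≤
      Finset.univ.sup' Finset.univ_nonempty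
        (fun u => 2 * (R u : ℝ) /
          Real.sqrt (((G.degree u : ℝ) + 1) * ((δ u : ℝ) + 1))) := by
  classical
  set g : V → ℝ := fun u => (Real.sqrt ((G.degree u : ℝ) + 1))⁻¹ with hg
  set p : V → ℝ :=
    fun u => (Real.sqrt (((G.degree u : ℝ) + 1) * ((δ u : ℝ) + 1)))⁻¹ with hp
  set C : ℝ := Finset.univ.sup' Finset.univ_nonempty
    (fun u => 2 * (R u : ℝ) /
      Real.sqrt (((G.degree u : ℝ) + 1) * ((δ u : ℝ) + 1))) with hC
  have hpnn : ∀ u, 0 ≤ p u := fun u => by positivity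
  have hgnn : ∀ u, 0 ≤ g u := fun u => by positivity
  have hCge : ∀ u, 2 * (R u : ℝ) * p u ≤ C := by
    intro u
    have h := Finset.le_sup' (f := fun u => 2 * (R u : ℝ) /
      Real.sqrt (((G.degree u : ℝ) + 1) * ((δ u : ℝ) + 1))) (Finset.mem_univ u)
    rw [div_eq_mul_inv] at h
    exact h
  have hC0 : 0 ≤ C := by
    obtain ⟨u⟩ := ‹Nonempty V›
    exact le_trans (by positivity) (hCge u)
  have hdiff : ∀ u v, (naam G 1 - naam Gp 1) u v
      = ((if G.Adj u v then (1:ℝ) else 0) - (if Gp.Adj u v then (1:ℝ) else 0))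
        * (g u * g v) := by
    intro u v
    rw [Matrix.sub_apply, naam_one_apply, naam_one_apply]
    simp only [← hdeg, hg]
    ring
  have hsym : ∀ u v, (naam G 1 - naam Gp 1) u v = (naam G 1 - naam Gp 1) v u := by
    intro u v
    rw [hdiff u v, hdiff v u]
    rw [if_congr (SimpleGraph.adj_comm G u v) rfl rfl,
      if_congr (SimpleGraph.adj_comm Gp u v) rfl rfl]
    ring
  apply opNorm_le_of_symm _ hsym hC0
  intro x
  set E : V → V → ℝ := fun u v =>
    if (G.Adj u v ∧ ¬ Gp.Adj u v) ∨ (Gp.Adj u v ∧ ¬ G.Adj u v) then (1:ℝ) else 0 with hE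
  have hEsym : ∀ u v, E u v = E v u := by
    intro u v
    simp only [hE]
    have hiff : ((G.Adj u v ∧ ¬ Gp.Adj u v) ∨ (Gp.Adj u v ∧ ¬ G.Adj u v)) ↔
        ((G.Adj v u ∧ ¬ Gp.Adj v u) ∨ (Gp.Adj v u ∧ ¬ G.Adj v u)) := by
      rw [SimpleGraph.adj_comm G u v, SimpleGraph.adj_comm Gp u v]
    exact if_congr hiff rfl rfl
  have hbound : ∀ u v, |(naam G 1 - naam Gp 1) u v * x u * x v|
      ≤ E u v * (p u * x u ^ 2 + p v * x v ^ 2) / 2 := by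
    intro u v
    by_cases hch : (G.Adj u v ∧ ¬ Gp.Adj u v) ∨ (Gp.Adj u v ∧ ¬ G.Adj u v)
    · have hE1 : E u v = 1 := by simp [hE, hch]
      have hd1 : ((if G.Adj u v then (1:ℝ) else 0) - (if Gp.Adj u v then (1:ℝ) else 0))
          * (g u * g v) * x u * x v
          = ((if G.Adj u v then (1:ℝ) else 0) - (if Gp.Adj u v then (1:ℝ) else 0))
          * (g u * g v * x u * x v) := by ring
      have habs : |(naam G 1 - naam Gp 1) u v * x u * x v|
          = (g u * g v) * (|x u| * |x v|) := by
        rw [hdiff u v, hd1, abs_mul]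
        have : |(if G.Adj u v then (1:ℝ) else 0) - (if Gp.Adj u v then (1:ℝ) else 0)| = 1 := by
          rcases hch with ⟨h1, h2⟩ | ⟨h1, h2⟩ <;> simp [h1, h2]
        rw [this, one_mul, abs_mul, abs_mul,
          abs_of_nonneg (mul_nonneg (hgnn u) (hgnn v))]
        ring
      rw [habs, hE1, one_mul]
      -- key inequalities
      have hδuv : (δ u : ℝ) ≤ (G.degree v : ℝ) := by exact_mod_cast hδ u v hch
      have hch' : (G.Adj v u ∧ ¬ Gp.Adj v u) ∨ (Gp.Adj v u ∧ ¬ G.Adj v u) := by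
        rcases hch with ⟨h1, h2⟩ | ⟨h1, h2⟩
        · exact Or.inl ⟨h1.symm, fun hc => h2 hc.symm⟩
        · exact Or.inr ⟨h1.symm, fun hc => h2 hc.symm⟩
      have hδvu : (δ v : ℝ) ≤ (G.degree u : ℝ) := by exact_mod_cast hδ v u hch'
      have hdu : (0:ℝ) < (G.degree u : ℝ) + 1 := by positivity
      have hdv : (0:ℝ) < (G.degree v : ℝ) + 1 := by positivity
      have h1 : g u * g v ≤ p u := by
        rw [hg, hp]
        simp only
        rw [← mul_inv, Real.sqrt_mul hdu.le]
        apply inv_anti₀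
        · positivity
        · exact mul_le_mul_of_nonneg_left
            (Real.sqrt_le_sqrt (by linarith)) (Real.sqrt_nonneg _)
      have h2 : g u * g v ≤ p v := by
        rw [hg, hp]
        simp only
        rw [← mul_inv, Real.sqrt_mul hdv.le, mul_comm ((Real.sqrt ((G.degree u : ℝ) + 1)))]
        apply inv_anti₀
        · positivity
        · exact mul_le_mul_of_nonneg_left
            (Real.sqrt_le_sqrt (by linarith)) (Real.sqrt_nonneg _)
      have e1 : g u * g v * x u ^ 2 ≤ p u * x u ^ 2 :=
        mul_le_mul_of_nonneg_right h1 (sq_nonneg _)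
      have e2 : g u * g v * x v ^ 2 ≤ p v * x v ^ 2 :=
        mul_le_mul_of_nonneg_right h2 (sq_nonneg _)
      have e3 : g u * g v * (|x u| * |x v|)
          ≤ (g u * g v * x u ^ 2 + g u * g v * x v ^ 2) / 2 := by
        have hgg : 0 ≤ g u * g v := mul_nonneg (hgnn u) (hgnn v)
        nlinarith [sq_nonneg (|x u| - |x v|), sq_abs (x u), sq_abs (x v)]
      linarith
    · have hE0 : E u v = 0 := by simp [hE, hch]
      have hzero : (if G.Adj u v then (1:ℝ) else 0) - (if Gp.Adj u v then (1:ℝ) else 0) = 0 := by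
        push_neg at hch
        by_cases h1 : G.Adj u v
        · have := hch.1 h1
          simp [h1, this]
        · by_cases h2 : Gp.Adj u v
          · exact absurd (hch.2 h2) h1
          · simp [h1, h2]
      rw [hdiff u v, hzero, hE0]
      simp
  have main := abs_quad_le (fun u v => (naam G 1 - naam Gp 1) u v * x u * x v) E
    (fun u => p u * x u ^ 2) hEsym hbound
  have hEsum : ∀ u, ∑ v, E u v ≤ 2 * (R u : ℝ) := by
    intro u
    rw [hE]
    simp only
    rw [Finset.sum_boole]
    have hcard : (Finset.univ.filter (fun v =>
        (G.Adj u v ∧ ¬ Gp.Adj u v) ∨ (Gp.Adj u v ∧ ¬ G.Adj u v))).card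
        ≤ R u + R u := by
      rw [Finset.filter_or]
      exact le_trans (Finset.card_union_le _ _) (add_le_add (hRD u) (hRA u))
    calc ((Finset.univ.filter (fun v =>
        (G.Adj u v ∧ ¬ Gp.Adj u v) ∨ (Gp.Adj u v ∧ ¬ G.Adj u v))).card : ℝ)
        ≤ ((R u + R u : ℕ) : ℝ) := by exact_mod_cast hcard
      _ = 2 * (R u : ℝ) := by push_cast; ring
  calc |∑ u, ∑ v, (naam G 1 - naam Gp 1) u v * x u * x v|
      ≤ ∑ u, (∑ v, E u v) * (p u * x u ^ 2) := main
    _ ≤ ∑ u, C * x u ^ 2 := by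
        refine Finset.sum_le_sum fun u _ => ?_
        calc (∑ v, E u v) * (p u * x u ^ 2)
            ≤ (2 * (R u : ℝ)) * (p u * x u ^ 2) :=
              mul_le_mul_of_nonneg_right (hEsum u)
                (mul_nonneg (hpnn u) (sq_nonneg _))
          _ = (2 * (R u : ℝ) * p u) * x u ^ 2 := by ring
          _ ≤ C * x u ^ 2 := mul_le_mul_of_nonneg_right (hCge u) (sq_nonneg _)
    _ = C * ∑ u, x u ^ 2 := by rw [Finset.mul_sum]

/-- For a degree-preserving perturbation (double edge rewiring), the SGCN logits
computed with `S̃ = naam G 1` and `S̃_p = naam G_p 1` satisfy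
`‖S̃^K X Θ − S̃_p^K X Θ‖_F ≤ √d K ‖Θ‖₂ max_u 2 R_u / √((d_u+1)(δ_u+1))`. -/
theorem stmt16 {V : Type*} [Fintype V] [DecidableEq V] [Nonempty V] {d c : ℕ}
    (G Gp : SimpleGraph V) [DecidableRel G.Adj] [DecidableRel Gp.Adj]
    (hdeg : ∀ u, G.degree u = Gp.degree u)
    (R : V → ℕ) (δ : V → ℕ)
    (hRD : ∀ u, (Finset.univ.filter (fun v => G.Adj u v ∧ ¬ Gp.Adj u v)).card ≤ R u)
    (hRA : ∀ u, (Finset.univ.filter (fun v => Gp.Adj u v ∧ ¬ G.Adj u v)).card ≤ R u)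
    (hδ : ∀ u v, (G.Adj u v ∧ ¬ Gp.Adj u v) ∨ (Gp.Adj u v ∧ ¬ G.Adj u v) →
      δ u ≤ G.degree v)
    (X : Matrix V (Fin d) ℝ) (hX : ∀ j, vecNorm (fun i => X i j) = 1)
    (Θ : Matrix (Fin d) (Fin c) ℝ) (K : ℕ) (hK : 1 ≤ K) :
    frobNorm (naam G 1 ^ K * X * Θ - naam Gp 1 ^ K * X * Θ) ≤
      Real.sqrt d * (K : ℝ) * opNorm Θ *
        Finset.univ.sup' Finset.univ_nonempty
          (fun u => 2 * (R u : ℝ) /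
            Real.sqrt (((G.degree u : ℝ) + 1) * ((δ u : ℝ) + 1))) := by
  set C : ℝ := Finset.univ.sup' Finset.univ_nonempty
    (fun u => 2 * (R u : ℝ) /
      Real.sqrt (((G.degree u : ℝ) + 1) * ((δ u : ℝ) + 1))) with hC
  have hdiffC : opNorm (naam G 1 - naam Gp 1) ≤ C :=
    opNorm_naam_diff_le G Gp hdeg R δ hRD hRA hδ
  have hC0 : 0 ≤ C := le_trans (opNorm_nonneg' _) hdiffC
  have hSK : opNorm (naam G 1 ^ K - naam Gp 1 ^ K) ≤ (K : ℝ) * C := by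
    refine le_trans (opNorm_pow_sub_pow (opNorm_naam_le_one G) (opNorm_naam_le_one Gp) K) ?_
    exact mul_le_mul_of_nonneg_left hdiffC (Nat.cast_nonneg K)
  have hfrobX : frobNorm X = Real.sqrt d := by
    unfold frobNorm
    rw [Finset.sum_comm]
    have hcol : ∀ j : Fin d, ∑ i, X i j ^ 2 = 1 := by
      intro j
      have h := hX j
      unfold vecNorm at h
      exact Real.sqrt_eq_one.mp h
    rw [Finset.sum_congr rfl fun j _ => hcol j]
    simp
  have hrw : naam G 1 ^ K * X * Θ - naam Gp 1 ^ K * X * Θ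
      = (naam G 1 ^ K - naam Gp 1 ^ K) * X * Θ := by
    rw [Matrix.sub_mul, Matrix.sub_mul]
  rw [hrw]
  calc frobNorm ((naam G 1 ^ K - naam Gp 1 ^ K) * X * Θ)
      ≤ frobNorm ((naam G 1 ^ K - naam Gp 1 ^ K) * X) * opNorm Θ := frob_mul_right _ _
    _ ≤ (opNorm (naam G 1 ^ K - naam Gp 1 ^ K) * frobNorm X) * opNorm Θ :=
        mul_le_mul_of_nonneg_right (frob_mul_left _ _) (opNorm_nonneg' Θ)
    _ ≤ (((K : ℝ) * C) * Real.sqrt d) * opNorm Θ := by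
        apply mul_le_mul_of_nonneg_right _ (opNorm_nonneg' Θ)
        rw [hfrobX]
        exact mul_le_mul_of_nonneg_right hSK (Real.sqrt_nonneg _)
    _ = Real.sqrt d * (K : ℝ) * opNorm Θ * C := by ring
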